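/- Let 𝒯* ⊆ 𝒯 be an r-test set with m* = |𝒯*| ≥ 2, let #_B ≥ 1 be the number of item pairs with ⊥(a,𝒯*) = r, let #₀ = r·n(n−1)/2, and let k = (r/(r+1))·m*·ln((r+1)·#₀/#_B). Define the potential function f(T̄) = (#(T̄) − (r/(r+1))·#_B)·(1 − (r+1)/(r·m*))^{k − |T̄|} for partial families T̄ ⊆ 𝒯. Then for every partial family T̄ ⊆ 𝒯 with #(T̄) > 0, there exists T ∈ 𝒯 \ T̄ with f(T̄ ∪ {T}) ≤ f(T̄); in particular, min_{T ∈ 𝒯 \ T̄} f(T̄ ∪ {T}) ≤ f(T̄). -/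

import Mathlib

/-!
Let `D = 𝒯* \ T̄`. A pair `a` with `⊥(a, T̄) < r` is differentiated by at least `r - ⊥(a, T̄)`
tests of `D`, and by one more unless `⊥(a, 𝒯*) = r`. Double counting and averaging over `D`
give a test `T` removing at least `((r + 1)/r · #(T̄) - #_B)/m*` from the measure, that is
`#(T̄ ∪ {T}) - c ≤ q (#(T̄) - c)` with `c = r #_B/(r + 1)` and `q = 1 - (r + 1)/(r m*)`;
multiplying by `q ^ (k - |T̄| - 1)` gives the claim.

The degenerate case `q = 0` (`r = 1`, `m* = 2`) is where `0 ^ 0 = 1` for `Real.rpow` could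
break the claim, namely if `k = |T̄|`, i.e. `exp |T̄| = n (n - 1)/#_B`. This cannot happen, since
`exp s` is irrational for every nonzero integer `s`.
-/

open Finset

/-- The set of item pairs: 2-element subsets of the item set `S` (here the whole type `α`). -/
def itemPairs (α : Type*) [Fintype α] [DecidableEq α] : Finset (Finset α) :=
  Finset.univ.filter fun a => a.card = 2

/-- `⊥(a, F)`: the number of tests in the family `F` that differentiate the item pair `a`,
i.e. the tests `T` with `|T ∩ a| = 1`. -/
def diffBy {α : Type*} [DecidableEq α] (a : Finset α) (F : Finset (Finset α)) : ℕ :=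
  (F.filter fun T => (T ∩ a).card = 1).card

/-- `F` is an `r`-test set for the collection `𝒯`: `F ⊆ 𝒯` and every item pair is
differentiated by at least `r` tests of `F`. -/
def IsRTestSet {α : Type*} [Fintype α] [DecidableEq α]
    (r : ℕ) (𝒯 F : Finset (Finset α)) : Prop :=
  F ⊆ 𝒯 ∧ ∀ a ∈ itemPairs α, r ≤ diffBy a F

/-- The differentiation measure `#(T̄) = ∑_a max (r - ⊥(a,T̄), 0)` (truncated subtraction). -/
def dmeasure {α : Type*} [Fintype α] [DecidableEq α]
    (r : ℕ) (F : Finset (Finset α)) : ℕ :=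
  ∑ a ∈ itemPairs α, (r - diffBy a F)

/-- A run of the set cover greedy algorithm SGA: a sequence of distinct tests from `𝒯`,
each chosen greedily to minimize the differentiation measure of the selected family,
selections continue while the measure is positive, and the final measure is `0`. -/
structure SGARun {α : Type*} [Fintype α] [DecidableEq α]
    (r : ℕ) (𝒯 : Finset (Finset α)) (L : List (Finset α)) : Prop where
  nodup : L.Nodup
  mem : ∀ T ∈ L, T ∈ 𝒯
  greedy : ∀ i : Fin L.length, ∀ T ∈ 𝒯, T ∉ (L.take i).toFinset →
      dmeasure r (insert (L.get i) (L.take i).toFinset) ≤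
        dmeasure r (insert T (L.take i).toFinset)
  pos : ∀ i < L.length, 0 < dmeasure r (L.take i).toFinset
  done : dmeasure r L.toFinset = 0

open Polynomial Filter Topology in
open scoped Nat in
/-- If `exp s = a / b`, the approximations `n exp s ≈ p g(s)` of the Lindemann–Weierstrass
argument make the integers `n a - p b g(s)` smaller than `1`, hence zero, so that `p ∣ a` for
arbitrarily large primes `p`. -/
theorem irrational_exp_intCast {s : ℤ} (hs : s ≠ 0) : Irrational (Real.exp s) := by
  rw [irrational_iff_ne_rational]
  intro a b hb hab
  obtain ⟨c, hc⟩ := LindemannWeierstrass.exp_polynomial_approx (X - C s) (by simpa using hs)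
  obtain ⟨N, hN⟩ := eventually_atTop.1 <|
    ((FloorSemiring.tendsto_pow_div_factorial_atTop c).const_mul (|b| * c)).eventually
      (gt_mem_nhds (show (|b| * c : ℝ) * 0 < 1 by simp))
  obtain ⟨p, hpN, hp⟩ := Nat.exists_infinite_primes (N + s.natAbs + a.natAbs + 1)
  obtain ⟨n, hpn, g, -, happrox⟩ :=
    hc p (by simp only [eval_sub, eval_X, eval_C, zero_sub, Int.natAbs_neg]; omega) hp
  have happrox_real : |n * Real.exp s - p * g.eval s| ≤ c ^ p / (p - 1)! := by
    have := happrox (r := s) (by rw [aroots_X_sub_C]; simp)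
    rw [← eq_intCast (algebraMap ℤ ℂ), aeval_algebraMap_apply_eq_algebraMap_eval] at this
    rw [← Real.norm_eq_abs, ← Complex.norm_real]
    push_cast
    simpa using this
  have hM : (b * (n * Real.exp s - p * g.eval s) : ℝ) = ((n * a - p * b * g.eval s : ℤ) : ℝ) := by
    rw [hab]; push_cast; field_simp
  have hMlt : |((n * a - p * b * g.eval s : ℤ) : ℝ)| < 1 := by
    rw [← hM, abs_mul]
    calc |(b:ℝ)| * |n * Real.exp s - p * g.eval s| ≤ |(b:ℝ)| * (c ^ p / (p - 1)!) := by gcongr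
      _ = |b| * c * (c ^ (p - 1) / (p - 1)!) := by
        obtain ⟨m, rfl⟩ := Nat.exists_eq_add_one_of_ne_zero hp.ne_zero
        rw [Nat.add_sub_cancel, pow_succ', Int.cast_abs]; ring
      _ < 1 := hN _ (by omega)
  have hM0 : n * a = p * b * g.eval s := by
    rw [← Int.cast_abs, ← Int.cast_one, Int.cast_lt, Int.abs_lt_one_iff, sub_eq_zero] at hMlt
    exact hMlt
  have hpa : (p : ℤ) ∣ a :=
    ((Nat.prime_iff_prime_int.1 hp).dvd_or_dvd ⟨_, hM0.trans (mul_assoc _ _ _)⟩).resolve_left hpn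
  have ha : a ≠ 0 := by
    rintro rfl
    simp at hab
  have hpa' := Int.natAbs_le_of_dvd_ne_zero hpa ha
  rw [Int.natAbs_natCast] at hpa'
  omega

theorem Real.log_ratCast_ne_intCast {x : ℚ} (hx : 0 < x) (hx1 : x ≠ 1) (t : ℤ) :
    Real.log x ≠ t := by
  intro h
  have hexp : Real.exp t = x := by rw [← h, Real.exp_log (by exact_mod_cast hx)]
  rcases eq_or_ne t 0 with rfl | ht
  · exact hx1 (by exact_mod_cast (by simpa using hexp.symm : (x : ℝ) = 1))
  · exact (irrational_exp_intCast ht).ne_rat x hexp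

section

variable {α : Type*} [DecidableEq α]

theorem diffBy_mono (a : Finset α) {F G : Finset (Finset α)} (h : F ⊆ G) :
    diffBy a F ≤ diffBy a G :=
  card_le_card (filter_subset_filter _ h)

theorem diffBy_le_diffBy_sdiff_add (a : Finset α) (F G : Finset (Finset α)) :
    diffBy a F ≤ diffBy a (F \ G) + diffBy a G :=
  calc diffBy a F ≤ diffBy a (F \ G ∪ G) :=
        diffBy_mono a (sdiff_union_self_eq_union (s := F) (t := G) ▸ subset_union_left)
    _ ≤ diffBy a (F \ G) + diffBy a G := by rw [diffBy, filter_union]; exact card_union_le _ _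

theorem diffBy_insert_of_notMem (a T : Finset α) {F : Finset (Finset α)} (hT : T ∉ F) :
    diffBy a (insert T F) = diffBy a F + if (T ∩ a).card = 1 then 1 else 0 := by
  unfold diffBy
  rw [filter_insert]
  split_ifs
  · rw [card_insert_of_notMem (fun h ↦ hT (mem_filter.1 h).1)]
  · rfl

variable [Fintype α]

theorem card_itemPairs : #(itemPairs α) = (Fintype.card α).choose 2 := by
  rw [itemPairs, ← powerset_univ, ← powersetCard_eq_filter, card_powersetCard, card_univ]

def unsatisfiedPairs (r : ℕ) (F : Finset (Finset α)) : Finset (Finset α) :=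
  (itemPairs α).filter fun a => diffBy a F < r

theorem dmeasure_eq_sum_unsatisfiedPairs (r : ℕ) (F : Finset (Finset α)) :
    dmeasure r F = ∑ a ∈ unsatisfiedPairs r F, (r - diffBy a F) :=
  (sum_filter_of_ne fun _ _ h ↦ Nat.lt_of_sub_ne_zero h).symm

theorem dmeasure_le_mul_card_unsatisfiedPairs (r : ℕ) (F : Finset (Finset α)) :
    dmeasure r F ≤ r * #(unsatisfiedPairs r F) := by
  rw [dmeasure_eq_sum_unsatisfiedPairs, mul_comm, ← smul_eq_mul, ← sum_const]
  exact sum_le_sum fun _ _ ↦ Nat.sub_le _ _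

theorem dmeasure_insert_add_card (r : ℕ) {T : Finset α} {F : Finset (Finset α)} (hT : T ∉ F) :
    dmeasure r (insert T F) + #((unsatisfiedPairs r F).filter fun a => (T ∩ a).card = 1) =
      dmeasure r F := by
  rw [unsatisfiedPairs, filter_filter, card_filter, dmeasure, dmeasure, ← sum_add_distrib]
  refine sum_congr rfl fun a _ ↦ ?_
  rw [diffBy_insert_of_notMem a T hT]
  split_ifs <;> omega

variable {r : ℕ} {F : Finset (Finset α)}

theorem dmeasure_add_card_unsatisfiedPairs_le (hF : ∀ a ∈ itemPairs α, r ≤ diffBy a F)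
    (Tb : Finset (Finset α)) :
    dmeasure r Tb + #(unsatisfiedPairs r Tb) ≤
      ∑ a ∈ unsatisfiedPairs r Tb, diffBy a (F \ Tb) + #{a ∈ itemPairs α | diffBy a F = r} := by
  set U := unsatisfiedPairs r Tb
  calc dmeasure r Tb + #U = ∑ a ∈ U, (r - diffBy a Tb + 1) := by
        rw [dmeasure_eq_sum_unsatisfiedPairs, sum_add_distrib, card_eq_sum_ones]
    _ ≤ ∑ a ∈ U, (diffBy a (F \ Tb) + if diffBy a F = r then 1 else 0) := by
        refine sum_le_sum fun a ha ↦ ?_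
        obtain ⟨hpair, hlt⟩ := mem_filter.1 ha
        have hr_le := hF a hpair
        have hsplit := diffBy_le_diffBy_sdiff_add a F Tb
        split_ifs <;> omega
    _ = ∑ a ∈ U, diffBy a (F \ Tb) + #{a ∈ U | diffBy a F = r} := by
        rw [sum_add_distrib, card_filter]
    _ ≤ ∑ a ∈ U, diffBy a (F \ Tb) + #{a ∈ itemPairs α | diffBy a F = r} := by
        gcongr
        exact filter_subset _ _

theorem exists_mul_dmeasure_insert_le (hF : ∀ a ∈ itemPairs α, r ≤ diffBy a F)
    {Tb : Finset (Finset α)} (hpos : 0 < dmeasure r Tb) :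
    ∃ T ∈ F \ Tb, r * #F * dmeasure r (insert T Tb) + (r + 1) * dmeasure r Tb ≤
      r * #F * dmeasure r Tb + r * #{a ∈ itemPairs α | diffBy a F = r} := by
  set U := unsatisfiedPairs r Tb
  set B := #{a ∈ itemPairs α | diffBy a F = r}
  set gain : Finset α → ℕ := fun T ↦ #{a ∈ U | (T ∩ a).card = 1}
  have hne : (F \ Tb).Nonempty := by
    rw [sdiff_nonempty]
    intro hFTb
    refine hpos.ne' <| (dmeasure_eq_sum_unsatisfiedPairs r Tb).trans <| sum_eq_zero fun a ha ↦ ?_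
    obtain ⟨hpair, hlt⟩ := mem_filter.1 ha
    exact absurd ((hF a hpair).trans (diffBy_mono a hFTb)) hlt.not_ge
  obtain ⟨T, hT, hmax⟩ := exists_max_image (F \ Tb) gain hne
  refine ⟨T, hT, ?_⟩
  have hsum : ∑ a ∈ U, diffBy a (F \ Tb) ≤ #F * gain T :=
    calc ∑ a ∈ U, diffBy a (F \ Tb) = ∑ T' ∈ F \ Tb, gain T' :=
          (sum_card_bipartiteAbove_eq_sum_card_bipartiteBelow _).symm
      _ ≤ #(F \ Tb) * gain T := sum_le_card_nsmul _ _ _ hmax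
      _ ≤ #F * gain T := by gcongr; exact sdiff_subset
  have hgain : dmeasure r (insert T Tb) + gain T = dmeasure r Tb :=
    dmeasure_insert_add_card r (mem_sdiff.1 hT).2
  have hcount : dmeasure r Tb + #U ≤ ∑ a ∈ U, diffBy a (F \ Tb) + B :=
    dmeasure_add_card_unsatisfiedPairs_le hF Tb
  have hU : dmeasure r Tb ≤ r * #U := dmeasure_le_mul_card_unsatisfiedPairs r Tb
  have hkey : (r + 1) * dmeasure r Tb ≤ r * #F * gain T + r * B :=
    calc (r + 1) * dmeasure r Tb ≤ r * (dmeasure r Tb + #U) := by nlinarith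
      _ ≤ r * (#F * gain T + B) := Nat.mul_le_mul_left r (by omega)
      _ = r * #F * gain T + r * B := by ring
  have hmul : r * #F * dmeasure r Tb = r * #F * dmeasure r (insert T Tb) + r * #F * gain T := by
    rw [← hgain]; ring
  omega

end

theorem sub_le_one_sub_div_mul_sub {r m N N' B : ℝ} (hr : 0 < r) (hm : 0 < m)
    (h : r * m * N' + (r + 1) * N ≤ r * m * N + r * B) :
    N' - r / (r + 1) * B ≤ (1 - (r + 1) / (r * m)) * (N - r / (r + 1) * B) := by
  have hrm : 0 < r * m := mul_pos hr hm
  rw [← sub_nonneg]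
  have : (1 - (r + 1) / (r * m)) * (N - r / (r + 1) * B) - (N' - r / (r + 1) * B) =
      (r * m * N + r * B - (r * m * N' + (r + 1) * N)) / (r * m) := by
    field_simp
    ring
  rw [this]
  exact div_nonneg (by linarith) hrm.le

theorem mul_rpow_sub_one_le_mul_rpow {q x x' e : ℝ} (hq : 0 ≤ q) (hx : x' ≤ q * x)
    (he : q = 0 → e ≠ 0) : x' * q ^ (e - 1) ≤ x * q ^ e := by
  rcases hq.eq_or_lt with rfl | hq
  · rw [Real.zero_rpow (he rfl), mul_zero]
    rcases eq_or_ne (e - 1) 0 with he' | he'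
    · simpa [he'] using hx
    · rw [Real.zero_rpow he', mul_zero]
  · calc x' * q ^ (e - 1) ≤ q * x * q ^ (e - 1) := by gcongr
      _ = x * q ^ e := by rw [← sub_add_cancel e 1, Real.rpow_add_one hq.ne']; ring_nf

theorem log_mul_sub_one_div_ne_natCast {n B : ℕ} (hB : 0 < B) (hBn : B ≤ n.choose 2) (t : ℕ) :
    Real.log (n * (n - 1) / B) ≠ t := by
  have hx : ((n * (n - 1) / B : ℝ)) = ((2 * n.choose 2 / B : ℚ) : ℝ) := by
    push_cast
    rw [Nat.cast_choose_two]
    ring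
  have hn : 0 < n.choose 2 := hB.trans_le hBn
  rw [hx]
  refine Real.log_ratCast_ne_intCast (by positivity) ?_ t
  rw [Ne, div_eq_one_iff_eq (by positivity)]
  exact_mod_cast (by omega : 2 * n.choose 2 ≠ B)

theorem stmt_7_general {α : Type*} [Fintype α] [DecidableEq α]
    (r : ℕ)
    (𝒯 Fstar : Finset (Finset α)) (hFstar : IsRTestSet r 𝒯 Fstar)
    (hm : 2 ≤ Fstar.card)
    (B : ℕ) (hBdef : B = ((itemPairs α).filter fun a => diffBy a Fstar = r).card)
    (hB : 1 ≤ B)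
    (N0 : ℝ)
    (hN0 : N0 = (r : ℝ) * (Fintype.card α) * ((Fintype.card α : ℝ) - 1) / 2)
    (k : ℝ)
    (hk : k = ((r : ℝ) / ((r : ℝ) + 1)) * (Fstar.card : ℝ) *
        Real.log (((r : ℝ) + 1) * N0 / (B : ℝ)))
    (f : Finset (Finset α) → ℝ)
    (hf : ∀ Tb : Finset (Finset α),
      f Tb = ((dmeasure r Tb : ℝ) - ((r : ℝ) / ((r : ℝ) + 1)) * (B : ℝ)) *
        (1 - ((r : ℝ) + 1) / ((r : ℝ) * (Fstar.card : ℝ))) ^ (k - (Tb.card : ℝ)))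
    (Tbar : Finset (Finset α))
    (hpos : 0 < dmeasure r Tbar) :
    ∃ T ∈ 𝒯 \ Tbar, f (insert T Tbar) ≤ f Tbar := by
  obtain ⟨hF𝒯, hF⟩ := hFstar
  have hr : 0 < r := Nat.pos_of_ne_zero fun h ↦ by simp [h, dmeasure] at hpos
  obtain ⟨T, hT, hstep⟩ := exists_mul_dmeasure_insert_le hF hpos
  obtain ⟨hTF, hTTbar⟩ := mem_sdiff.1 hT
  refine ⟨T, mem_sdiff.2 ⟨hF𝒯 hTF, hTTbar⟩, ?_⟩
  rw [hf, hf, card_insert_of_notMem hTTbar, Nat.cast_add, Nat.cast_one, ← sub_sub]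
  rw [← hBdef] at hstep
  refine mul_rpow_sub_one_le_mul_rpow ?_
    (sub_le_one_sub_div_mul_sub (by positivity) (by positivity) (by exact_mod_cast hstep)) ?_
  · rw [sub_nonneg, div_le_one (by positivity)]
    exact_mod_cast (by nlinarith : r + 1 ≤ r * Fstar.card)
  · intro hq
    have hrm : r * Fstar.card = r + 1 := by
      rw [sub_eq_zero, eq_comm, div_eq_one_iff_eq (by positivity)] at hq
      exact_mod_cast hq.symm
    obtain ⟨rfl, hm2⟩ : r = 1 ∧ Fstar.card = 2 := by constructor <;> nlinarith
    have hBle : B ≤ (Fintype.card α).choose 2 :=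
      hBdef ▸ card_itemPairs (α := α) ▸ card_filter_le _ _
    rw [sub_ne_zero, hk, hN0, hm2]
    convert log_mul_sub_one_div_ne_natCast hB hBle Tbar.card using 2
    ring_nf

/-- with the potential function
`f(T̄) = (#(T̄) − (r/(r+1))·#_B)·(1 − (r+1)/(r·m*))^(k − |T̄|)` (real exponentiation),
for every partial family `T̄ ⊆ 𝒯` with `#(T̄) > 0` there is `T ∈ 𝒯 \ T̄` with
`f(T̄ ∪ {T}) ≤ f(T̄)`. -/
theorem stmt_7 {α : Type*} [Fintype α] [DecidableEq α]
    (r : ℕ) (hr : 1 ≤ r) (hn : 2 ≤ Fintype.card α)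
    (𝒯 Fstar : Finset (Finset α)) (hFstar : IsRTestSet r 𝒯 Fstar)
    (hm : 2 ≤ Fstar.card)
    (B : ℕ) (hBdef : B = ((itemPairs α).filter fun a => diffBy a Fstar = r).card)
    (hB : 1 ≤ B)
    (N0 : ℝ)
    (hN0 : N0 = (r : ℝ) * (Fintype.card α) * ((Fintype.card α : ℝ) - 1) / 2)
    (k : ℝ)
    (hk : k = ((r : ℝ) / ((r : ℝ) + 1)) * (Fstar.card : ℝ) *
        Real.log (((r : ℝ) + 1) * N0 / (B : ℝ)))
    (f : Finset (Finset α) → ℝ)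
    (hf : ∀ Tb : Finset (Finset α),
      f Tb = ((dmeasure r Tb : ℝ) - ((r : ℝ) / ((r : ℝ) + 1)) * (B : ℝ)) *
        (1 - ((r : ℝ) + 1) / ((r : ℝ) * (Fstar.card : ℝ))) ^ (k - (Tb.card : ℝ)))
    (Tbar : Finset (Finset α)) (hTbar : Tbar ⊆ 𝒯)
    (hpos : 0 < dmeasure r Tbar) :
    ∃ T ∈ 𝒯 \ Tbar, f (insert T Tbar) ≤ f Tbar :=
  stmt_7_general r 𝒯 Fstar hFstar hm B hBdef hB N0 hN0 k hk f hf Tbar hpos
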